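/- Let P be a real symmetric positive definite n×n matrix, H a real p×n matrix of rank p (1 ≤ p ≤ n), and Q a real symmetric positive definite p×p matrix, and set P_mod := P + Hᵀ·(Q − (H·P⁻¹·Hᵀ)⁻¹)·H. Then P_mod·P⁻¹·Hᵀ = Hᵀ·Q·(H·P⁻¹·Hᵀ), and consequently the column space of P_mod⁻¹·Hᵀ equals the column space of P⁻¹·Hᵀ. -/

import Mathlib

open Matrix

/-!
Write `S := H P⁻¹ Hᵀ`; it is positive definite because `P⁻¹` is and the rows of `H` are linearly
independent. Multiplying out, `P_mod P⁻¹ Hᵀ = Hᵀ + Hᵀ (Q - S⁻¹) S = Hᵀ Q S`. By the matrix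
determinant lemma `det P_mod = det P · det (1 + S (Q - S⁻¹)) = det P · det S · det Q ≠ 0`, so `P_mod` is
invertible and `P⁻¹ Hᵀ = P_mod⁻¹ Hᵀ (Q S)` with `Q S` invertible: the two matrices have the same
column space.
-/

namespace Matrix

variable {m n K : Type*} [Fintype m]

theorem range_mulVecLin_mul_of_isUnit_det [CommRing K] [DecidableEq m] (B : Matrix n m K)
    {U : Matrix m m K} (hU : IsUnit U.det) :
    LinearMap.range (B * U).mulVecLin = LinearMap.range B.mulVecLin := by
  rw [mulVecLin_mul, LinearMap.range_comp_of_range_eq_top]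
  exact LinearMap.range_eq_top.mpr <| mulVec_surjective_iff_isUnit.mpr <|
    (isUnit_iff_isUnit_det U).mpr hU

variable [Fintype n]

theorem vecMul_injective_of_rank_eq_card [Field K] {H : Matrix m n K}
    (hH : H.rank = Fintype.card m) : Function.Injective H.vecMul := by
  rw [vecMul_injective_iff, linearIndependent_iff_card_eq_finrank_span, Set.finrank,
    ← rank_eq_finrank_span_row, hH]

theorem PosDef.mul_mul_transpose_of_rank_eq_card {P : Matrix n n ℝ} (hP : P.PosDef)
    {H : Matrix m n ℝ} (hH : H.rank = Fintype.card m) : (H * P * Hᵀ).PosDef := by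
  simpa using hP.mul_mul_conjTranspose_same (vecMul_injective_of_rank_eq_card hH)

section ModifiedMetric

variable [DecidableEq m] [DecidableEq n] [CommRing K]

/-- The paper's `P_mod`. -/
noncomputable def modifiedMetric (P : Matrix n n K) (H : Matrix m n K) (Q : Matrix m m K) :
    Matrix n n K :=
  P + Hᵀ * (Q - (H * P⁻¹ * Hᵀ)⁻¹) * H

variable {P : Matrix n n K} {H : Matrix m n K} (Q : Matrix m m K)

theorem modifiedMetric_mul_inv_mul_transpose (hP : IsUnit P.det)
    (hS : IsUnit (H * P⁻¹ * Hᵀ).det) :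
    modifiedMetric P H Q * P⁻¹ * Hᵀ = Hᵀ * Q * (H * P⁻¹ * Hᵀ) := by
  set S := H * P⁻¹ * Hᵀ
  calc modifiedMetric P H Q * P⁻¹ * Hᵀ = Hᵀ + Hᵀ * (Q - S⁻¹) * S := by
        simp only [modifiedMetric, Matrix.add_mul, Matrix.mul_assoc,
          mul_nonsing_inv_cancel_left (A := P) _ hP, S]
    _ = Hᵀ * Q * S := by
        rw [Matrix.mul_sub, Matrix.sub_mul, Matrix.mul_assoc Hᵀ S⁻¹ S, nonsing_inv_mul _ hS,
          Matrix.mul_one, add_sub_cancel]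

theorem det_modifiedMetric (hP : IsUnit P.det) (hS : IsUnit (H * P⁻¹ * Hᵀ).det) :
    (modifiedMetric P H Q).det = P.det * ((H * P⁻¹ * Hᵀ).det * Q.det) := by
  rw [modifiedMetric, det_add_mul _ _ hP, ← Matrix.mul_assoc, Matrix.mul_sub,
    mul_nonsing_inv _ hS, add_sub_cancel, det_mul]

end ModifiedMetric

end Matrix

theorem stmt_5_general {n p : ℕ}
    (P : Matrix (Fin n) (Fin n) ℝ) (hP : P.PosDef)
    (H : Matrix (Fin p) (Fin n) ℝ) (hH : H.rank = p)
    (Q : Matrix (Fin p) (Fin p) ℝ) (hQ : Q.PosDef) :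
    (P + Hᵀ * (Q - (H * P⁻¹ * Hᵀ)⁻¹) * H) * P⁻¹ * Hᵀ = Hᵀ * Q * (H * P⁻¹ * Hᵀ) ∧
      LinearMap.range ((P + Hᵀ * (Q - (H * P⁻¹ * Hᵀ)⁻¹) * H)⁻¹ * Hᵀ).mulVecLin
        = LinearMap.range (P⁻¹ * Hᵀ).mulVecLin := by
  show modifiedMetric P H Q * P⁻¹ * Hᵀ = _ ∧
    LinearMap.range ((modifiedMetric P H Q)⁻¹ * Hᵀ).mulVecLin = _
  set S := H * P⁻¹ * Hᵀ
  have hPdet : IsUnit P.det := (isUnit_iff_isUnit_det P).mp hP.isUnit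
  have hSdet : IsUnit S.det := (isUnit_iff_isUnit_det S).mp <|
    (hP.inv.mul_mul_transpose_of_rank_eq_card (by rwa [Fintype.card_fin])).isUnit
  have hQdet : IsUnit Q.det := (isUnit_iff_isUnit_det Q).mp hQ.isUnit
  have hPmod : IsUnit (modifiedMetric P H Q).det := by
    rw [det_modifiedMetric Q hPdet hSdet]
    exact hPdet.mul (hSdet.mul hQdet)
  have key : modifiedMetric P H Q * P⁻¹ * Hᵀ = Hᵀ * Q * S :=
    modifiedMetric_mul_inv_mul_transpose Q hPdet hSdet
  refine ⟨key, ?_⟩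
  have hPinvHt : P⁻¹ * Hᵀ = (modifiedMetric P H Q)⁻¹ * Hᵀ * (Q * S) := by
    rw [Matrix.mul_assoc _ Hᵀ, ← Matrix.mul_assoc Hᵀ, ← key, Matrix.mul_assoc,
      nonsing_inv_mul_cancel_left (A := modifiedMetric P H Q) _ hPmod]
  rw [hPinvHt, range_mulVecLin_mul_of_isUnit_det _ (by rw [det_mul]; exact hQdet.mul hSdet)]

/-- For `P` symmetric positive definite, `H` of rank `p`, `Q` symmetric positive definite, and
`P_mod := P + Hᵀ·(Q − (H·P⁻¹·Hᵀ)⁻¹)·H`, one has `P_mod·P⁻¹·Hᵀ = Hᵀ·Q·(H·P⁻¹·Hᵀ)`, and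
consequently the column space of `P_mod⁻¹·Hᵀ` equals the column space of `P⁻¹·Hᵀ`. -/
theorem stmt_5 {n p : ℕ} (hp1 : 1 ≤ p) (hpn : p ≤ n)
    (P : Matrix (Fin n) (Fin n) ℝ) (hPsym : P.IsSymm) (hP : P.PosDef)
    (H : Matrix (Fin p) (Fin n) ℝ) (hH : H.rank = p)
    (Q : Matrix (Fin p) (Fin p) ℝ) (hQsym : Q.IsSymm) (hQ : Q.PosDef) :
    (P + Hᵀ * (Q - (H * P⁻¹ * Hᵀ)⁻¹) * H) * P⁻¹ * Hᵀ = Hᵀ * Q * (H * P⁻¹ * Hᵀ) ∧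
      LinearMap.range ((P + Hᵀ * (Q - (H * P⁻¹ * Hᵀ)⁻¹) * H)⁻¹ * Hᵀ).mulVecLin
        = LinearMap.range (P⁻¹ * Hᵀ).mulVecLin :=
  stmt_5_general P hP H hH Q hQ
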